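/- arXiv:1704.04035 — 3 statements merged into one kernel-verified Lean document; each statement's English description precedes it below -/
import Mathlib

section
/- A subsonic gas state is uniquely determined by its mass flux, total enthalpy and specific entropy: let (ρ₁, q, E₁) and (ρ₂, q, E₂) be gas states with the same mass flux q, with positive densities and positive pressures, both subsonic. If their specific entropies agree (s₁ = s₂) and their total enthalpies agree (h₁ = h₂), then ρ₁ = ρ₂ and E₁ = E₂. -/
/-- Strict monotonicity of `ρ ↦ γ/(γ-1) A ρ^(γ-1) + q²/(2ρ²)` given subsonicity at `a`. -/
lemma aux_enthalpy_mono (γ A a b q2 : ℝ) (hγ : 1 < γ) (hA : 0 < A) (ha : 0 < a)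
    (hab : a < b) (hq0 : 0 ≤ q2) (hq : q2 < γ * A * a ^ (γ + 1)) :
    γ / (γ - 1) * A * a ^ (γ - 1) + q2 / (2 * a ^ 2)
      < γ / (γ - 1) * A * b ^ (γ - 1) + q2 / (2 * b ^ 2) := by
  have hb : 0 < b := ha.trans hab
  set L := Real.log (b / a) with hLdef
  have hL : 0 < L := Real.log_pos (by rw [lt_div_iff₀ ha]; linarith)
  have hP : 0 < a ^ (γ - 1) := Real.rpow_pos_of_pos ha _
  have hQ : 0 < b ^ (γ - 1) := Real.rpow_pos_of_pos hb _
  -- a^(γ+1) = a^(γ-1) * a^2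
  have hpow : a ^ (γ + 1) = a ^ (γ - 1) * a ^ 2 := by
    rw [← Real.rpow_natCast a 2, ← Real.rpow_add ha]
    norm_num
    congr 1
    ring
  -- F1 : a^(γ-1) * (1 + (γ-1)*L) ≤ b^(γ-1)
  have hF1 : a ^ (γ - 1) * (1 + (γ - 1) * L) ≤ b ^ (γ - 1) := by
    have hba : b ^ (γ - 1) = a ^ (γ - 1) * (b / a) ^ (γ - 1) := by
      rw [← Real.mul_rpow ha.le (by positivity)]
      rw [mul_div_cancel₀ _ (ne_of_gt ha)]
    have hexp : (b / a) ^ (γ - 1) = Real.exp ((γ - 1) * L) := by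
      rw [Real.rpow_def_of_pos (by positivity), hLdef, mul_comm]
    have := Real.add_one_le_exp ((γ - 1) * L)
    rw [hba, hexp]
    nlinarith [hP]
  -- F2 : (1 - 2L) * b^2 ≤ a^2
  have hF2 : (1 - 2 * L) * b ^ 2 ≤ a ^ 2 := by
    have h1 : a ^ 2 = (a / b) ^ 2 * b ^ 2 := by field_simp
    have h2 : (a / b) ^ 2 = Real.exp (-(2 * L)) := by
      have : Real.log (a / b) = -L := by
        rw [hLdef, ← Real.log_inv]
        congr 1
        field_simp
      rw [← Real.exp_log (show (0:ℝ) < (a/b)^2 by positivity)]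
      rw [Real.log_pow]
      push_cast
      rw [this]
      ring_nf
    have h3 := Real.add_one_le_exp (-(2 * L))
    nlinarith [sq_nonneg b]
  have hγ1 : (0:ℝ) < γ - 1 := by linarith
  have ha2 : (0:ℝ) < a ^ 2 := by positivity
  have hb2 : (0:ℝ) < b ^ 2 := by positivity
  rw [hpow] at hq
  rw [← sub_pos]
  have key : γ / (γ - 1) * A * b ^ (γ - 1) + q2 / (2 * b ^ 2)
      - (γ / (γ - 1) * A * a ^ (γ - 1) + q2 / (2 * a ^ 2))
      = (γ * A * b ^ (γ - 1) * (2 * a ^ 2 * b ^ 2) + q2 * (γ - 1) * a ^ 2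
        - (γ * A * a ^ (γ - 1) * (2 * a ^ 2 * b ^ 2) + q2 * (γ - 1) * b ^ 2))
        / ((γ - 1) * (2 * a ^ 2 * b ^ 2)) := by
    field_simp
  rw [key]
  apply div_pos _ (by positivity)
  nlinarith [mul_le_mul_of_nonneg_left hF1 (show (0:ℝ) ≤ γ * A * (2 * a ^ 2 * b ^ 2) by positivity),
    mul_le_mul_of_nonneg_left hF2 (show (0:ℝ) ≤ q2 * (γ - 1) by positivity),
    mul_lt_mul_of_pos_left hq (show (0:ℝ) < (γ - 1) * (2 * L) * b ^ 2 by positivity)]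

/-- A subsonic gas state is uniquely determined by its mass flux, total enthalpy and
specific entropy: if two subsonic states share the mass flux `q`, the specific entropy
and the total enthalpy, then they coincide. -/
theorem subsonic_state_unique_from_flux_enthalpy_entropy
    (γ cv : ℝ) (hγ : 1 < γ) (hcv : 0 < cv)
    (ρ₁ ρ₂ q E₁ E₂ p₁ p₂ : ℝ)
    (hρ₁ : 0 < ρ₁) (hρ₂ : 0 < ρ₂)
    (hp₁def : p₁ = (γ - 1) * (E₁ - q ^ 2 / (2 * ρ₁)))
    (hp₂def : p₂ = (γ - 1) * (E₂ - q ^ 2 / (2 * ρ₂)))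
    (hp₁ : 0 < p₁) (hp₂ : 0 < p₂)
    (hsub₁ : |q / ρ₁| < Real.sqrt (γ * p₁ / ρ₁))
    (hsub₂ : |q / ρ₂| < Real.sqrt (γ * p₂ / ρ₂))
    (hs : cv * Real.log (p₁ / ρ₁ ^ γ) = cv * Real.log (p₂ / ρ₂ ^ γ))
    (hh : (E₁ + p₁) / ρ₁ = (E₂ + p₂) / ρ₂) :
    ρ₁ = ρ₂ ∧ E₁ = E₂ := by
  have hγ1 : (0:ℝ) < γ - 1 := by linarith
  have hrg1 : 0 < ρ₁ ^ γ := Real.rpow_pos_of_pos hρ₁ _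
  have hrg2 : 0 < ρ₂ ^ γ := Real.rpow_pos_of_pos hρ₂ _
  -- entropy equality gives a common constant A with p = A ρ^γ
  have hlog : Real.log (p₁ / ρ₁ ^ γ) = Real.log (p₂ / ρ₂ ^ γ) :=
    mul_left_cancel₀ (ne_of_gt hcv) hs
  have hAeq : p₁ / ρ₁ ^ γ = p₂ / ρ₂ ^ γ := by
    have := congrArg Real.exp hlog
    rwa [Real.exp_log (div_pos hp₁ hrg1), Real.exp_log (div_pos hp₂ hrg2)] at this
  set A := p₁ / ρ₁ ^ γ with hAdef
  have hA : 0 < A := div_pos hp₁ hrg1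
  have hp1A : p₁ = A * ρ₁ ^ γ := by rw [hAdef]; field_simp
  have hp2A : p₂ = A * ρ₂ ^ γ := by rw [hAeq]; field_simp
  -- rpow splitting
  have hr1 : ρ₁ ^ γ = ρ₁ ^ (γ - 1) * ρ₁ := by
    have h := Real.rpow_add hρ₁ (γ - 1) 1
    rw [Real.rpow_one] at h
    rw [← h]; congr 1; ring
  have hr2 : ρ₂ ^ γ = ρ₂ ^ (γ - 1) * ρ₂ := by
    have h := Real.rpow_add hρ₂ (γ - 1) 1
    rw [Real.rpow_one] at h
    rw [← h]; congr 1; ring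
  have hr1' : ρ₁ ^ (γ + 1) = ρ₁ ^ γ * ρ₁ := by
    have h := Real.rpow_add hρ₁ γ 1
    rw [Real.rpow_one] at h
    rw [← h]
  have hr2' : ρ₂ ^ (γ + 1) = ρ₂ ^ γ * ρ₂ := by
    have h := Real.rpow_add hρ₂ γ 1
    rw [Real.rpow_one] at h
    rw [← h]
  -- subsonicity squared
  have hq1 : q ^ 2 < γ * A * ρ₁ ^ (γ + 1) := by
    have h1 : (q / ρ₁) ^ 2 < γ * p₁ / ρ₁ := by
      calc (q / ρ₁) ^ 2 = |q / ρ₁| ^ 2 := (sq_abs _).symm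
        _ < Real.sqrt (γ * p₁ / ρ₁) ^ 2 :=
            pow_lt_pow_left₀ hsub₁ (abs_nonneg _) two_ne_zero
        _ = γ * p₁ / ρ₁ := Real.sq_sqrt (by positivity)
    rw [div_pow, div_lt_div_iff₀ (by positivity) hρ₁] at h1
    rw [hr1', hp1A] at *
    nlinarith [sq_nonneg ρ₁]
  have hq2 : q ^ 2 < γ * A * ρ₂ ^ (γ + 1) := by
    have h1 : (q / ρ₂) ^ 2 < γ * p₂ / ρ₂ := by
      calc (q / ρ₂) ^ 2 = |q / ρ₂| ^ 2 := (sq_abs _).symm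
        _ < Real.sqrt (γ * p₂ / ρ₂) ^ 2 :=
            pow_lt_pow_left₀ hsub₂ (abs_nonneg _) two_ne_zero
        _ = γ * p₂ / ρ₂ := Real.sq_sqrt (by positivity)
    rw [div_pow, div_lt_div_iff₀ (by positivity) hρ₂] at h1
    rw [hr2', hp2A] at *
    nlinarith [sq_nonneg ρ₂]
  -- energies in terms of pressure
  have hE1 : E₁ = p₁ / (γ - 1) + q ^ 2 / (2 * ρ₁) := by
    rw [hp₁def]; field_simp; ring
  have hE2 : E₂ = p₂ / (γ - 1) + q ^ 2 / (2 * ρ₂) := by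
    rw [hp₂def]; field_simp; ring
  -- enthalpy in canonical form
  have key1 : (E₁ + p₁) / ρ₁ = γ / (γ - 1) * A * ρ₁ ^ (γ - 1) + q ^ 2 / (2 * ρ₁ ^ 2) := by
    rw [hE1, hp1A, hr1]; field_simp; ring
  have key2 : (E₂ + p₂) / ρ₂ = γ / (γ - 1) * A * ρ₂ ^ (γ - 1) + q ^ 2 / (2 * ρ₂ ^ 2) := by
    rw [hE2, hp2A, hr2]; field_simp; ring
  have heq : γ / (γ - 1) * A * ρ₁ ^ (γ - 1) + q ^ 2 / (2 * ρ₁ ^ 2)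
      = γ / (γ - 1) * A * ρ₂ ^ (γ - 1) + q ^ 2 / (2 * ρ₂ ^ 2) := by
    rw [← key1, ← key2]; exact hh
  have hρ : ρ₁ = ρ₂ := by
    rcases lt_trichotomy ρ₁ ρ₂ with h | h | h
    · exact absurd heq
        (ne_of_lt (aux_enthalpy_mono γ A ρ₁ ρ₂ (q ^ 2) hγ hA hρ₁ h (sq_nonneg q) hq1))
    · exact h
    · exact absurd heq.symm
        (ne_of_lt (aux_enthalpy_mono γ A ρ₂ ρ₁ (q ^ 2) hγ hA hρ₂ h (sq_nonneg q) hq2))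
  refine ⟨hρ, ?_⟩
  have hpeq : p₁ = p₂ := by rw [hp1A, hp2A, hρ]
  rw [hE1, hE2, hpeq, hρ]
end

section
/- For a junction joining two pipes of equal cross section, the coupling conditions single out the mirrored state: let Y₁ = (ρ₁, q₁, E₁) and Y₂ = (ρ₂, q₂, E₂) be subsonic gas states with positive densities and positive pressures. Then the three conditions q₁ + q₂ = 0, h₁ = h₂ and s₁ = s₂ hold simultaneously if and only if ρ₁ = ρ₂, q₁ = −q₂ and E₁ = E₂. -/
/-! Equal entropies give both states the same adiabatic constant `K = p / ρ ^ γ`, so with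
`q₁ = -q₂ = q` the total enthalpy of either state is `H ρ = γ / (γ - 1) · K ρ ^ (γ - 1) + q² / (2ρ²)`
evaluated at its own density. Since `H' ρ = (γ K ρ ^ (γ + 1) - q²) / ρ³`, `H` is strictly
increasing on the subsonic densities, those with `q² < γ p ρ = γ K ρ ^ (γ + 1)`, so equal
enthalpies force equal densities. -/

open Real Set

noncomputable def isentropicEnthalpy (γ K q ρ : ℝ) : ℝ :=
  γ / (γ - 1) * K * ρ ^ (γ - 1) + q ^ 2 / (2 * ρ ^ 2)

section

variable {γ K q : ℝ}

theorem hasDerivAt_isentropicEnthalpy (hγ : γ ≠ 1) {x : ℝ} (hx : 0 < x) :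
    HasDerivAt (isentropicEnthalpy γ K q) ((γ * K * x ^ (γ + 1) - q ^ 2) / x ^ 3) x := by
  have hpow := ((hasDerivAt_rpow_const (p := γ - 1) (Or.inl hx.ne')).const_mul
    (γ / (γ - 1) * K)).add ((hasDerivAt_const x (q ^ 2)).div
      ((hasDerivAt_pow 2 x).const_mul 2) (by positivity))
  refine hpow.congr_deriv ?_
  have hγ1 : γ - 1 ≠ 0 := sub_ne_zero.mpr hγ
  have hrpow : x ^ (γ + 1) = x ^ (γ - 1 - 1) * x ^ 3 := by
    rw [← rpow_natCast, ← rpow_add hx]; congr 1; push_cast; ring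
  rw [hrpow]
  field_simp
  ring

theorem isentropicEnthalpy_strictMonoOn (hγ : γ ≠ 1) (hγ' : -1 ≤ γ) {a : ℝ} (ha : 0 < a)
    (hsub : q ^ 2 < γ * K * a ^ (γ + 1)) :
    StrictMonoOn (isentropicEnthalpy γ K q) (Ici a) := by
  have hγK : 0 < γ * K :=
    pos_of_mul_pos_left ((sq_nonneg q).trans_lt hsub) (rpow_pos_of_pos ha _).le
  refine strictMonoOn_of_deriv_pos (convex_Ici a) ?_ ?_
  · exact fun x hx ↦ (hasDerivAt_isentropicEnthalpy hγ
      (ha.trans_le hx)).continuousAt.continuousWithinAt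
  · intro x hx
    rw [interior_Ici] at hx
    have hx0 : 0 < x := ha.trans hx
    rw [(hasDerivAt_isentropicEnthalpy hγ hx0).deriv]
    have : a ^ (γ + 1) ≤ x ^ (γ + 1) := rpow_le_rpow ha.le hx.le (by linarith)
    have : 0 < γ * K * x ^ (γ + 1) - q ^ 2 := by nlinarith
    positivity

theorem isentropicEnthalpy_injOn_subsonic (hγ : γ ≠ 1) (hγ' : -1 ≤ γ) :
    InjOn (isentropicEnthalpy γ K q) {ρ | 0 < ρ ∧ q ^ 2 < γ * K * ρ ^ (γ + 1)} := by
  have key : ∀ ⦃a b : ℝ⦄, 0 < a → q ^ 2 < γ * K * a ^ (γ + 1) → a < b →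
      isentropicEnthalpy γ K q a ≠ isentropicEnthalpy γ K q b := fun a b ha hsub hab ↦
    (isentropicEnthalpy_strictMonoOn hγ hγ' ha hsub self_mem_Ici hab.le hab).ne
  intro a ⟨ha, hsuba⟩ b ⟨hb, hsubb⟩ heq
  rcases lt_trichotomy a b with hab | rfl | hba
  · exact absurd heq (key ha hsuba hab)
  · rfl
  · exact absurd heq.symm (key hb hsubb hba)

end

theorem isentropicEnthalpy_neg (γ K q ρ : ℝ) :
    isentropicEnthalpy γ K (-q) ρ = isentropicEnthalpy γ K q ρ := by
  rw [isentropicEnthalpy, isentropicEnthalpy, neg_sq]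

theorem sq_lt_mul_rpow_of_abs_div_lt_sqrt {γ K ρ q p : ℝ} (hρ : 0 < ρ) (hK : p = K * ρ ^ γ)
    (hsub : |q / ρ| < √(γ * p / ρ)) : q ^ 2 < γ * K * ρ ^ (γ + 1) := by
  have h := (lt_sqrt (abs_nonneg _)).mp hsub
  rw [sq_abs, div_pow, div_lt_div_iff₀ (by positivity) hρ] at h
  rw [rpow_add_one hρ.ne', ← mul_assoc, mul_assoc γ, ← hK]
  nlinarith

theorem enthalpy_eq_isentropicEnthalpy {γ K ρ q E p : ℝ} (hγ : γ ≠ 1) (hρ : 0 < ρ)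
    (hp : p = (γ - 1) * (E - q ^ 2 / (2 * ρ))) (hK : p = K * ρ ^ γ) :
    (E + p) / ρ = isentropicEnthalpy γ K q ρ := by
  have hγ1 : γ - 1 ≠ 0 := sub_ne_zero.mpr hγ
  have hE : E = p / (γ - 1) + q ^ 2 / (2 * ρ) := by
    rw [hp]; field_simp; ring
  have hρpow : ρ ^ γ = ρ ^ (γ - 1) * ρ := by
    rw [← rpow_add_one hρ.ne']; ring_nf
  rw [isentropicEnthalpy, hE, hK, hρpow]
  field_simp
  ring

/-- For a junction joining two pipes of equal cross section, the coupling conditions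
`q₁ + q₂ = 0`, `h₁ = h₂`, `s₁ = s₂` hold for two subsonic states if and only if the
states are mirror images: `ρ₁ = ρ₂`, `q₁ = −q₂`, `E₁ = E₂`. -/
theorem coupling_conditions_iff_mirrored_state
    (γ cv : ℝ) (hγ : 1 < γ) (hcv : 0 < cv)
    (ρ₁ q₁ E₁ ρ₂ q₂ E₂ p₁ p₂ : ℝ)
    (hρ₁ : 0 < ρ₁) (hρ₂ : 0 < ρ₂)
    (hp₁def : p₁ = (γ - 1) * (E₁ - q₁ ^ 2 / (2 * ρ₁)))
    (hp₂def : p₂ = (γ - 1) * (E₂ - q₂ ^ 2 / (2 * ρ₂)))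
    (hp₁ : 0 < p₁) (hp₂ : 0 < p₂)
    (hsub₁ : |q₁ / ρ₁| < Real.sqrt (γ * p₁ / ρ₁))
    (hsub₂ : |q₂ / ρ₂| < Real.sqrt (γ * p₂ / ρ₂)) :
    (q₁ + q₂ = 0 ∧ (E₁ + p₁) / ρ₁ = (E₂ + p₂) / ρ₂ ∧
        cv * Real.log (p₁ / ρ₁ ^ γ) = cv * Real.log (p₂ / ρ₂ ^ γ)) ↔
      (ρ₁ = ρ₂ ∧ q₁ = -q₂ ∧ E₁ = E₂) := by
  constructor
  · rintro ⟨hq, hh, hs⟩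
    obtain rfl : q₁ = -q₂ := eq_neg_of_add_eq_zero_left hq
    have hK : p₁ / ρ₁ ^ γ = p₂ / ρ₂ ^ γ := log_injOn_pos (div_pos hp₁ (by positivity))
      (div_pos hp₂ (by positivity)) (mul_left_cancel₀ hcv.ne' hs)
    set K := p₁ / ρ₁ ^ γ
    have hK₁ : p₁ = K * ρ₁ ^ γ := (div_mul_cancel₀ _ (by positivity)).symm
    have hK₂ : p₂ = K * ρ₂ ^ γ := by rw [hK, div_mul_cancel₀ _ (by positivity)]
    have hsub₁' := sq_lt_mul_rpow_of_abs_div_lt_sqrt hρ₁ hK₁ hsub₁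
    rw [neg_sq] at hsub₁'
    have hρ : ρ₁ = ρ₂ := isentropicEnthalpy_injOn_subsonic hγ.ne' (by linarith)
      ⟨hρ₁, hsub₁'⟩ ⟨hρ₂, sq_lt_mul_rpow_of_abs_div_lt_sqrt hρ₂ hK₂ hsub₂⟩ <| by
        rw [← isentropicEnthalpy_neg, ← enthalpy_eq_isentropicEnthalpy hγ.ne' hρ₁ hp₁def hK₁,
          ← enthalpy_eq_isentropicEnthalpy hγ.ne' hρ₂ hp₂def hK₂, hh]
    subst hρ
    have hp : p₁ = p₂ := by rw [hK₁, hK₂]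
    refine ⟨rfl, rfl, ?_⟩
    linarith [(div_left_inj' hρ₁.ne').mp hh]
  · rintro ⟨rfl, rfl, rfl⟩
    have hp : p₁ = p₂ := by rw [hp₁def, hp₂def, neg_sq]
    exact ⟨neg_add_cancel q₂, by rw [hp], by rw [hp]⟩
end

section
/- The specific entropy is stationary along the 3-Lax curve at the base pressure: let γ > 1, c_v > 0 and let (ρ_R, p_R) be a base density and pressure, both positive, with φ the density function of the Lax-curve parametrisation based at (ρ_R, p_R). Then the entropy function S(σ) := c_v·ln(σ/φ(σ)^γ) has derivative S′(p_R) = 0 at σ = p_R. -/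
/-!
Both branches of the 3-Lax curve leave the base point with the same slope: the rarefaction
branch `ρ (σ/p)^(1/γ)` and the shock branch `ρ (σ + μ²p)/(μ²σ + p)` both have derivative
`ρ/(γ p)` at `σ = p` (for the shock branch because `(1 - μ²)/(1 + μ²) = 1/γ`). Hence `φ` is
differentiable at `p` with `φ'(p)/φ(p) = 1/(γ p)`, and near `p` we have
`S = c_v (log σ - γ log φ)`, whose derivative `c_v (1/p - γ φ'(p)/φ(p))` vanishes.
-/

/-- The density function `φ` of the Lax-curve parametrisation. -/
noncomputable def laxPhi (γ ρ p : ℝ) (σ : ℝ) : ℝ :=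
  if σ ≤ p then
    ρ * (σ / p) ^ (1 / γ)
  else
    ρ * (σ + ((γ - 1) / (γ + 1)) * p) / (((γ - 1) / (γ + 1)) * σ + p)

open Set

section LaxCurve

variable {γ ρ p : ℝ}

theorem laxPhi_self (hp : p ≠ 0) : laxPhi γ ρ p p = ρ := by
  simp [laxPhi, div_self hp]

theorem hasDerivWithinAt_laxPhi_Iic (hγ : γ ≠ 0) (hp : p ≠ 0) :
    HasDerivWithinAt (laxPhi γ ρ p) (ρ / (γ * p)) (Iic p) p := by
  have h : HasDerivAt (fun σ => ρ * (σ / p) ^ (1 / γ))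
      (ρ * (1 / p * (1 / γ) * (p / p) ^ (1 / γ - 1))) p :=
    (((hasDerivAt_id p).div_const p).rpow_const (Or.inl (by simp [hp]))).const_mul ρ
  rw [div_self hp, Real.one_rpow] at h
  refine (h.hasDerivWithinAt.congr_of_mem (fun σ hσ => if_pos hσ) self_mem_Iic).congr_deriv ?_
  field_simp

theorem hasDerivWithinAt_laxPhi_Ici (hγ : 0 < γ) (hp : 0 < p) :
    HasDerivWithinAt (laxPhi γ ρ p) (ρ / (γ * p)) (Ici p) p := by
  set μ2 := (γ - 1) / (γ + 1) with hμ2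
  have hμ2p : μ2 * p + p = 2 * γ / (γ + 1) * p := by
    rw [hμ2]; field_simp; ring
  have hden : μ2 * p + p ≠ 0 := by rw [hμ2p]; positivity
  have h : HasDerivAt (fun σ => ρ * (σ + μ2 * p) / (μ2 * σ + p))
      ((ρ * 1 * (μ2 * p + p) - ρ * (p + μ2 * p) * (μ2 * 1)) / (μ2 * p + p) ^ 2) p :=
    (((hasDerivAt_id p).add_const _).const_mul ρ).div
      (((hasDerivAt_id p).const_mul μ2).add_const p) hden
  refine (h.hasDerivWithinAt.congr_of_mem (fun σ hσ => ?_) self_mem_Ici).congr_deriv ?_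
  · rcases (mem_Ici.mp hσ).eq_or_lt with hpσ | hlt
    · rw [← hpσ, laxPhi_self hp.ne', add_comm p, mul_div_assoc, div_self hden, mul_one]
    · exact if_neg (not_le.mpr hlt)
  · rw [hμ2] at hμ2p ⊢
    rw [add_comm p, hμ2p]
    field_simp
    ring

theorem hasDerivAt_laxPhi_self (hγ : 0 < γ) (hp : 0 < p) :
    HasDerivAt (laxPhi γ ρ p) (ρ / (γ * p)) p := by
  have h := (hasDerivWithinAt_laxPhi_Iic (ρ := ρ) hγ.ne' hp.ne').union
    (hasDerivWithinAt_laxPhi_Ici hγ hp)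
  rwa [Iic_union_Ici, hasDerivWithinAt_univ] at h

end LaxCurve

theorem lax3_entropy_deriv_at_base_eq_zero_general
    (γ cv : ℝ) (hγ : 1 < γ)
    (ρR pR : ℝ) (hρ : 0 < ρR) (hp : 0 < pR) :
    HasDerivAt (fun σ : ℝ => cv * Real.log (σ / laxPhi γ ρR pR σ ^ γ)) 0 pR := by
  have hγ0 : 0 < γ := by linarith
  have hφ := hasDerivAt_laxPhi_self (ρ := ρR) hγ0 hp
  have hφp : laxPhi γ ρR pR pR = ρR := laxPhi_self hp.ne'
  have hpos : ∀ᶠ σ in nhds pR, 0 < σ ∧ 0 < laxPhi γ ρR pR σ :=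
    (lt_mem_nhds hp).and (hφ.continuousAt.eventually (lt_mem_nhds (hφp.symm ▸ hρ)))
  have hS : HasDerivAt (fun σ => cv * (Real.log σ - γ * Real.log (laxPhi γ ρR pR σ)))
      (cv * (pR⁻¹ - γ * (ρR / (γ * pR) / laxPhi γ ρR pR pR))) pR :=
    ((Real.hasDerivAt_log hp.ne').sub ((hφ.log (hφp.symm ▸ hρ.ne')).const_mul γ)).const_mul cv
  rw [hφp, show pR⁻¹ - γ * (ρR / (γ * pR) / ρR) = 0 by field_simp; ring, mul_zero] at hS
  refine hS.congr_of_eventuallyEq ?_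
  filter_upwards [hpos] with σ ⟨hσ, hφσ⟩
  rw [Real.log_div hσ.ne' (Real.rpow_pos_of_pos hφσ γ).ne', Real.log_rpow hφσ]

/-- The specific entropy `S(σ) = c_v·ln(σ/φ(σ)^γ)` is stationary along the 3-Lax curve
at the base pressure: `S′(p_R) = 0`. -/
theorem lax3_entropy_deriv_at_base_eq_zero
    (γ cv : ℝ) (hγ : 1 < γ) (hcv : 0 < cv)
    (ρR pR : ℝ) (hρ : 0 < ρR) (hp : 0 < pR) :
    HasDerivAt (fun σ : ℝ => cv * Real.log (σ / laxPhi γ ρR pR σ ^ γ)) 0 pR :=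
  lax3_entropy_deriv_at_base_eq_zero_general γ cv hγ ρR pR hρ hp
end
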